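/- There exists a number C₀ > 2 such that for every real C ≥ C₀ and every z ∈ 𝔻 the following two inequalities hold: Re[ 1 / ( (1−z)·Log(C/(1−z)) ) ] > 1/(2 log(C/2)) and Re[ z / ( (1−z)·Log(C/(1−z)) ) ] > −1/(2 log(C/2)), where Log denotes the principal branch of the logarithm (well defined since Re(C/(1−z)) > C/2 > 0 for z ∈ 𝔻). -/

import Mathlib

open Set Metric Real

/-!
Put `ζ = C / (1 - z)`, so that `Re ζ > C / 2` and `1 / ((1 - z) Log ζ) = (ζ / Log ζ) / C`.
For `w = Log ζ = a + b i` with `|b| < π / 2` and `s = log (Re ζ) = a + log (cos b)`,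
`Re (ζ / w) = e^s (a + b tan b) / (a² + b²)`. Since `b tan b + log (cos b)` dominates both
`b² / 2` and `(log (cos b))² / 8`, one gets `a² + b² ≤ s (a + b tan b)` once `s ≥ 10`, hence
`Re (ζ / w) ≥ e^s / s > (C / 2) / log (C / 2)` because `e^t / t` increases on `[1, ∞)`.
The second estimate follows from `z / (1 - z) = 1 / (1 - z) - 1` and
`Re (1 / w) ≤ 1 / a < 1 / log (C / 2)`.
-/

lemma hasDerivAt_mul_tan_add_log_cos_sub {x : ℝ} (hx : cos x ≠ 0) :
    HasDerivAt (fun b ↦ b * tan b + log (cos b) - b ^ 2 / 2) (x * tan x ^ 2) x := by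
  have h := (((hasDerivAt_id x).mul (hasDerivAt_tan hx)).add ((hasDerivAt_cos x).log hx)).sub
    ((hasDerivAt_pow 2 x).div_const 2)
  refine h.congr_deriv ?_
  rw [tan_eq_sin_div_cos]
  field_simp
  simp only [id_eq, Nat.cast_ofNat]
  rw [sin_sq]
  ring

lemma sq_div_two_le_mul_tan_add_log_cos {b : ℝ} (hb : |b| < π / 2) :
    b ^ 2 / 2 ≤ b * tan b + log (cos b) := by
  suffices h : ∀ t ∈ Ico 0 (π / 2), t ^ 2 / 2 ≤ t * tan t + log (cos t) by
    rcases le_or_gt 0 b with hb0 | hb0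
    · exact h b ⟨hb0, (abs_lt.mp hb).2⟩
    · simpa [tan_neg] using h (-b) ⟨by linarith, by rwa [abs_of_neg hb0] at hb⟩
  have hderiv : ∀ t ∈ Ico 0 (π / 2), HasDerivAt (fun b ↦ b * tan b + log (cos b) - b ^ 2 / 2)
      (t * tan t ^ 2) t := fun t ht ↦ hasDerivAt_mul_tan_add_log_cos_sub
    (cos_pos_of_mem_Ioo ⟨by linarith [pi_pos, ht.1], ht.2⟩).ne'
  have hmono : MonotoneOn (fun b ↦ b * tan b + log (cos b) - b ^ 2 / 2) (Ico 0 (π / 2)) := by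
    refine monotoneOn_of_deriv_nonneg (convex_Ico _ _)
      (fun t ht ↦ (hderiv t ht).continuousAt.continuousWithinAt) ?_ ?_
    · rw [interior_Ico]
      exact fun t ht ↦ (hderiv t (Ioo_subset_Ico_self ht)).differentiableAt.differentiableWithinAt
    · rw [interior_Ico]
      intro t ht
      rw [(hderiv t (Ioo_subset_Ico_self ht)).deriv]
      exact mul_nonneg ht.1.le (sq_nonneg _)
  intro t ht
  simpa using hmono ⟨le_rfl, pi_div_two_pos⟩ ht ht.1

lemma sq_log_cos_le_sq {b : ℝ} (hb : |b| ≤ 1) : log (cos b) ^ 2 ≤ b ^ 2 := by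
  have hb2 : b ^ 2 ≤ 1 := by nlinarith [sq_abs b, abs_nonneg b]
  have hcos : 1 - b ^ 2 / 2 ≤ cos b := one_sub_sq_div_two_le_cos
  have hcos_pos : 0 < cos b := by linarith
  have hc0 : 0 ≤ -log (cos b) := neg_nonneg.mpr (log_nonpos hcos_pos.le (cos_le_one b))
  have hlog : -log (cos b) ≤ (cos b)⁻¹ - 1 := by
    simpa [log_inv] using log_le_sub_one_of_pos (inv_pos.mpr hcos_pos)
  have hinv : (cos b)⁻¹ ≤ 1 + b ^ 2 := by
    rw [inv_le_iff_one_le_mul₀ hcos_pos]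
    nlinarith
  have hsq := pow_le_pow_left₀ hc0 (hlog.trans (by linarith) : -log (cos b) ≤ b ^ 2) 2
  nlinarith

lemma sq_log_cos_le_of_one_lt_abs {b : ℝ} (hb1 : 1 < |b|) (hb : |b| < π / 2) :
    log (cos b) ^ 2 ≤ 8 * (b * tan b + log (cos b)) := by
  have hcos := cos_pos_of_mem_Ioo (abs_lt.mp hb)
  set c := -log (cos b) with hc
  have hc0 : 0 ≤ c := neg_nonneg.mpr (log_nonpos hcos.le (cos_le_one b))
  have hexp : exp c = (cos b)⁻¹ := by rw [hc, exp_neg, exp_log hcos]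
  -- Jordan's inequality: `b sin b ≥ 2 b² / π`.
  have hsin : 1 / 2 ≤ b * sin b := by
    have hjordan := mul_le_sin (abs_nonneg b) hb.le
    have habs : b * sin b = |b| * sin |b| := by
      rcases abs_choice b with h | h <;> simp [h]
    have hpi : 1 / 2 ≤ 2 / π := by rw [le_div_iff₀ pi_pos]; linarith [pi_le_four]
    rw [habs]
    nlinarith [mul_le_mul hpi hb1.le zero_le_one (by positivity : (0 : ℝ) ≤ 2 / π)]
  have htan : b * tan b = b * sin b * exp c := by
    rw [hexp, tan_eq_sin_div_cos]; ring
  have hquad := quadratic_le_exp_of_nonneg hc0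
  have : 1 / 2 * exp c ≤ b * sin b * exp c := mul_le_mul_of_nonneg_right hsin (exp_pos c).le
  nlinarith [sq_nonneg (c - 2)]

lemma sq_log_cos_le {b : ℝ} (hb : |b| < π / 2) :
    log (cos b) ^ 2 ≤ 8 * (b * tan b + log (cos b)) := by
  rcases le_or_gt |b| 1 with h | h
  · nlinarith [sq_log_cos_le_sq h, sq_div_two_le_mul_tan_add_log_cos hb]
  · exact sq_log_cos_le_of_one_lt_abs h hb

lemma sq_add_sq_le_of_ten_le_add_log_cos {a b : ℝ} (hb : |b| < π / 2)
    (hs : 10 ≤ a + log (cos b)) :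
    a ^ 2 + b ^ 2 ≤ (a + log (cos b)) * (a + b * tan b) := by
  nlinarith [sq_div_two_le_mul_tan_add_log_cos hb, sq_log_cos_le hb]

lemma exp_div_self_lt_exp_div_self {x y : ℝ} (hx : 1 ≤ x) (hxy : x < y) :
    exp x / x < exp y / y := by
  have hexp := add_one_lt_exp (sub_pos.mpr hxy).ne'
  rw [exp_sub, lt_div_iff₀ (exp_pos x)] at hexp
  rw [div_lt_div_iff₀ (by linarith) (by linarith)]
  have : 0 ≤ (y - x) * (x - 1) * exp x := by
    have := sub_nonneg.mpr hxy.le; have := sub_nonneg.mpr hx; positivity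
  nlinarith

lemma exp_div_self_lt_re_exp_div_self {L : ℝ} {w : ℂ} (hL : 10 ≤ L) (hw : |w.im| < π / 2)
    (hre : exp L < (Complex.exp w).re) : exp L / L < (Complex.exp w / w).re := by
  have hre_eq : (Complex.exp w / w).re =
      exp w.re * (w.re * cos w.im + w.im * sin w.im) / (w.re ^ 2 + w.im ^ 2) := by
    rw [Complex.div_re, Complex.exp_re, Complex.exp_im, Complex.normSq_apply]
    ring
  rw [Complex.exp_re] at hre
  set a := w.re
  set b := w.im
  have hcos := cos_pos_of_mem_Ioo (abs_lt.mp hw)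
  set s := a + log (cos b)
  have hexp_s : exp a * cos b = exp s := by rw [exp_add, exp_log hcos]
  have hLs : L < s := by rwa [hexp_s, exp_lt_exp] at hre
  have ha : 10 ≤ a := by linarith [log_nonpos hcos.le (cos_le_one b)]
  have hnorm : 0 < a ^ 2 + b ^ 2 := by positivity
  have hkey := sq_add_sq_le_of_ten_le_add_log_cos hw (by linarith : 10 ≤ s)
  calc exp L / L < exp s / s := exp_div_self_lt_exp_div_self (by linarith) hLs
    _ ≤ exp s * (a + b * tan b) / (a ^ 2 + b ^ 2) := by
      rw [div_le_div_iff₀ (by linarith) hnorm]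
      nlinarith [exp_pos s]
    _ = (Complex.exp w / w).re := by
      rw [hre_eq, ← hexp_s, tan_eq_sin_div_cos]
      field_simp

lemma div_log_lt_re_div_log {T : ℝ} {ζ : ℂ} (hT : exp 10 ≤ T) (hζ : T < ζ.re) :
    T / log T < (ζ / Complex.log ζ).re := by
  have hT0 : 0 < T := (exp_pos 10).trans_le hT
  have hζ0 : ζ ≠ 0 := by rintro rfl; simp at hζ; linarith
  have harg : |(Complex.log ζ).im| < π / 2 := by
    rw [Complex.log_im]
    exact Complex.abs_arg_lt_pi_div_two_iff.mpr (Or.inl (hT0.trans hζ))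
  have h := exp_div_self_lt_re_exp_div_self ((le_log_iff_exp_le hT0).mpr hT) harg
    (by rwa [Complex.exp_log hζ0, exp_log hT0])
  rwa [Complex.exp_log hζ0, exp_log hT0] at h

lemma one_half_lt_re_inv_one_sub {z : ℂ} (hz : ‖z‖ < 1) : 1 / 2 < ((1 - z)⁻¹).re := by
  have hsq : z.re * z.re + z.im * z.im < 1 := by
    rw [← Complex.normSq_apply, Complex.normSq_eq_norm_sq]
    nlinarith [norm_nonneg z]
  have hre : z.re < 1 := by nlinarith [mul_self_nonneg z.im]
  have hnorm : 0 < Complex.normSq (1 - z) := by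
    rw [Complex.normSq_apply]
    simp only [Complex.sub_re, Complex.one_re, Complex.sub_im, Complex.one_im]
    nlinarith
  rw [Complex.inv_re, lt_div_iff₀ hnorm, Complex.normSq_apply]
  simp only [Complex.sub_re, Complex.one_re, Complex.sub_im, Complex.one_im]
  nlinarith

lemma half_lt_re_div_one_sub {C : ℝ} {z : ℂ} (hC : 0 < C) (hz : ‖z‖ < 1) :
    C / 2 < ((C : ℂ) / (1 - z)).re := by
  rw [div_eq_mul_inv (C : ℂ), Complex.re_ofReal_mul]
  nlinarith [one_half_lt_re_inv_one_sub hz]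

lemma re_inv_le_inv_re {w : ℂ} (hw : 0 < w.re) : (w⁻¹).re ≤ 1 / w.re := by
  rw [Complex.inv_re, div_le_div_iff₀ (Complex.normSq_pos.mpr (by rintro rfl; simp at hw)) hw,
    Complex.normSq_apply]
  nlinarith [mul_self_nonneg w.im]

lemma re_inv_log_lt_one_div_log {T : ℝ} {ζ : ℂ} (hT : 1 < T) (hζ : T < ζ.re) :
    ((Complex.log ζ)⁻¹).re < 1 / log T := by
  have hlog : log T < (Complex.log ζ).re := by
    rw [Complex.log_re]
    exact log_lt_log (by linarith) (hζ.trans_le (Complex.re_le_norm ζ))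
  have hT0 : 0 < log T := log_pos hT
  exact (re_inv_le_inv_re (hT0.trans hlog)).trans_lt (one_div_lt_one_div_of_lt hT0 hlog)

lemma one_div_two_mul_log_lt_re_one_div {C : ℝ} {z : ℂ} (hC : 2 * exp 10 ≤ C) (hz : ‖z‖ < 1) :
    1 / (2 * log (C / 2)) < (1 / ((1 - z) * Complex.log (C / (1 - z)))).re := by
  have hC0 : 0 < C := by linarith [exp_pos 10]
  have hform : 1 / ((1 - z) * Complex.log (C / (1 - z))) =
      C / (1 - z) / Complex.log (C / (1 - z)) / C := by
    have : (C : ℂ) ≠ 0 := by exact_mod_cast hC0.ne'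
    field_simp
  rw [hform, Complex.div_ofReal_re, lt_div_iff₀ hC0]
  calc 1 / (2 * log (C / 2)) * C = C / 2 / log (C / 2) := by ring
    _ < _ := div_log_lt_re_div_log (by linarith) (half_lt_re_div_one_sub hC0 hz)

/-- there is `C₀ > 2` such that for all `C ≥ C₀` and `z ∈ 𝔻`:
`Re[1/((1−z)·Log(C/(1−z)))] > 1/(2 log(C/2))` and
`Re[z/((1−z)·Log(C/(1−z)))] > −1/(2 log(C/2))` (principal logarithm). -/
theorem exists_C0_halfplane_estimates :
    ∃ C₀ : ℝ, 2 < C₀ ∧ ∀ C : ℝ, C₀ ≤ C → ∀ z ∈ ball (0 : ℂ) 1,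
      1 / (2 * Real.log (C / 2)) <
        (1 / ((1 - z) * Complex.log ((C : ℂ) / (1 - z)))).re ∧
      -(1 / (2 * Real.log (C / 2))) <
        (z / ((1 - z) * Complex.log ((C : ℂ) / (1 - z)))).re := by
  refine ⟨2 * exp 10, by linarith [add_one_le_exp (10 : ℝ)], fun C hC z hz ↦ ?_⟩
  rw [mem_ball_zero_iff] at hz
  have hfirst := one_div_two_mul_log_lt_re_one_div hC hz
  refine ⟨hfirst, ?_⟩
  have hC1 : 1 < C / 2 := by linarith [add_one_le_exp (10 : ℝ)]
  have hinv := re_inv_log_lt_one_div_log hC1 (half_lt_re_div_one_sub (by linarith) hz)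
  have hz1 : 1 - z ≠ 0 := sub_ne_zero.mpr (by rintro rfl; simp at hz)
  have hsplit : z / ((1 - z) * Complex.log (C / (1 - z))) =
      1 / ((1 - z) * Complex.log (C / (1 - z))) - (Complex.log (C / (1 - z)))⁻¹ := by
    field_simp
    ring
  rw [hsplit, Complex.sub_re]
  have : 1 / (2 * log (C / 2)) = 1 / log (C / 2) / 2 := by ring
  linarith
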